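/- arXiv:2512.11069 — 3 statements merged into one kernel-verified Lean document; each statement's English description precedes it below -/
import Mathlib

section
/- Let p be a prime, α, β ∈ Q_p nonzero with v_p(α) = −r_α and v_p(β) = −r_β, and let h_α, h_β ≥ 1 be integers; set k = min{h_α, h_β}. Then: (i) for all α′, β′ ∈ Q_p with v_p(α′) = −r_α, v_p(β′) = −r_β, v_p(α − α′) ≥ −r_α + h_α and v_p(β − β′) ≥ −r_β + h_β, one has v_p(αβ − α′β′) ≥ −r_α − r_β + k, so that αβ and α′β′ agree in their first k digits; (ii) there exist α̃, β̃ ∈ Q_p with v_p(α̃) = −r_α, v_p(β̃) = −r_β, v_p(α − α̃) ≥ −r_α + h_α and v_p(β − β̃) ≥ −r_β + h_β such that v_p(αβ − α̃β̃) = −r_α − r_β + k, so the (k+1)-th digit of the product is not determined. -/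
open scoped Classical

/-- The `p`-adic valuation on `ℚ_[p]`, with `vp p 0 = ⊤` (i.e. `v_p(0) = +∞`). -/
noncomputable def vp (p : ℕ) [Fact p.Prime] (x : ℚ_[p]) : WithTop ℤ :=
  if x = 0 then ⊤ else (x.valuation : WithTop ℤ)

section Aux

variable {p : ℕ} [hp : Fact p.Prime]

lemma vp_eq_addValuation (x : ℚ_[p]) : vp p x = Padic.addValuation x := by
  by_cases hx : x = 0
  · subst hx; simp [vp]
  · rw [vp, if_neg hx, Padic.addValuation.apply hx]

lemma pQ_ne_zero : (p : ℚ_[p]) ≠ 0 :=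
  Nat.cast_ne_zero.mpr hp.out.ne_zero

lemma vp_p_zpow (n : ℤ) : vp p ((p : ℚ_[p]) ^ n) = (n : WithTop ℤ) := by
  have h0 : (p : ℚ_[p]) ^ n ≠ 0 := zpow_ne_zero n pQ_ne_zero
  rw [vp, if_neg h0, WithTop.coe_eq_coe]
  have h1 : (1 : ℝ) < p := by exact_mod_cast hp.out.one_lt
  have hnorm := Padic.norm_eq_zpow_neg_valuation h0
  rw [Padic.norm_p_zpow] at hnorm
  have := (zpow_right_strictMono₀ h1).injective hnorm.symm
  omega

end Aux


/-- with `k = min{h_α, h_β}`: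
(i) if `α'` agrees with `α` in its first `h_α` digits and `β'` agrees with `β` in its first
`h_β` digits, then `v_p(αβ - α'β') ≥ -r_α - r_β + k`, i.e. `αβ` and `α'β'` agree in their
first `k` digits;
(ii) there exist such `α̃, β̃` with `v_p(αβ - α̃β̃) = -r_α - r_β + k` exactly, so the
`(k+1)`-th digit of the product is not determined. -/
theorem stmt1 (p : ℕ) [Fact p.Prime] (rα rβ : ℤ) (hα hβ : ℕ) (hhα : 1 ≤ hα) (hhβ : 1 ≤ hβ)
    (α β : ℚ_[p]) (hα0 : α ≠ 0) (hβ0 : β ≠ 0)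
    (hvα : vp p α = ((-rα : ℤ) : WithTop ℤ)) (hvβ : vp p β = ((-rβ : ℤ) : WithTop ℤ)) :
    (∀ α' β' : ℚ_[p],
        vp p α' = ((-rα : ℤ) : WithTop ℤ) → vp p β' = ((-rβ : ℤ) : WithTop ℤ) →
        ((-rα + hα : ℤ) : WithTop ℤ) ≤ vp p (α - α') →
        ((-rβ + hβ : ℤ) : WithTop ℤ) ≤ vp p (β - β') →
        ((-rα - rβ + min (hα : ℤ) (hβ : ℤ) : ℤ) : WithTop ℤ) ≤ vp p (α * β - α' * β')) ∧
    (∃ α' β' : ℚ_[p],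
        vp p α' = ((-rα : ℤ) : WithTop ℤ) ∧ vp p β' = ((-rβ : ℤ) : WithTop ℤ) ∧
        ((-rα + hα : ℤ) : WithTop ℤ) ≤ vp p (α - α') ∧
        ((-rβ + hβ : ℤ) : WithTop ℤ) ≤ vp p (β - β') ∧
        vp p (α * β - α' * β') = ((-rα - rβ + min (hα : ℤ) (hβ : ℤ) : ℤ) : WithTop ℤ)) := by
  set v : AddValuation ℚ_[p] (WithTop ℤ) := Padic.addValuation with hv
  have hvdef : ∀ x : ℚ_[p], vp p x = v x := fun x => vp_eq_addValuation x
  simp only [hvdef] at hvα hvβ ⊢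
  constructor
  · intro α' β' hvα' hvβ' hdα hdβ
    have key : α * β - α' * β' = α * (β - β') + (α - α') * β' := by ring
    rw [key]
    have e1 : v (α * (β - β')) = v α + v (β - β') := v.map_mul _ _
    have e2 : v ((α - α') * β') = v (α - α') + v β' := v.map_mul _ _
    have h1 : ((-rα - rβ + min (hα : ℤ) (hβ : ℤ) : ℤ) : WithTop ℤ) ≤ v (α * (β - β')) := by
      rw [e1, hvα]
      calc ((-rα - rβ + min (hα : ℤ) (hβ : ℤ) : ℤ) : WithTop ℤ)
          ≤ (((-rα) + (-rβ + hβ) : ℤ) : WithTop ℤ) := by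
            rw [WithTop.coe_le_coe]; omega
        _ = ((-rα : ℤ) : WithTop ℤ) + ((-rβ + hβ : ℤ) : WithTop ℤ) := by
            rw [← WithTop.coe_add]
        _ ≤ ((-rα : ℤ) : WithTop ℤ) + v (β - β') := by
            exact add_le_add_right hdβ _
    have h2 : ((-rα - rβ + min (hα : ℤ) (hβ : ℤ) : ℤ) : WithTop ℤ) ≤ v ((α - α') * β') := by
      rw [e2, hvβ']
      calc ((-rα - rβ + min (hα : ℤ) (hβ : ℤ) : ℤ) : WithTop ℤ)
          ≤ (((-rα + hα) + (-rβ) : ℤ) : WithTop ℤ) := by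
            rw [WithTop.coe_le_coe]; omega
        _ = ((-rα + hα : ℤ) : WithTop ℤ) + ((-rβ : ℤ) : WithTop ℤ) := by
            rw [← WithTop.coe_add]
        _ ≤ v (α - α') + ((-rβ : ℤ) : WithTop ℤ) := by
            exact add_le_add_left hdα _
    exact le_trans (le_min h1 h2) (v.map_add _ _)
  · rcases le_total hα hβ with hle | hle
    · -- perturb α
      have hmin : min (hα : ℤ) (hβ : ℤ) = (hα : ℤ) := by omega
      set t : ℚ_[p] := (p : ℚ_[p]) ^ (-rα + hα : ℤ) with ht
      have hvt : v t = ((-rα + hα : ℤ) : WithTop ℤ) := by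
        rw [← hvdef]; exact vp_p_zpow _
      have hlt : v α < v t := by
        rw [hvα, hvt, WithTop.coe_lt_coe]; omega
      refine ⟨α + t, β, ?_, hvβ, ?_, ?_, ?_⟩
      · rw [v.map_add_eq_of_lt_left hlt, hvα]
      · have : α - (α + t) = -t := by ring
        rw [this, v.map_neg, hvt]
      · simp only [sub_self]
        rw [← hvdef, vp]
        simp
      · have : α * β - (α + t) * β = -(t * β) := by ring
        rw [this, v.map_neg, v.map_mul, hvt, hvβ, ← WithTop.coe_add, WithTop.coe_eq_coe, hmin]
        omega
    · -- perturb β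
      have hmin : min (hα : ℤ) (hβ : ℤ) = (hβ : ℤ) := by omega
      set t : ℚ_[p] := (p : ℚ_[p]) ^ (-rβ + hβ : ℤ) with ht
      have hvt : v t = ((-rβ + hβ : ℤ) : WithTop ℤ) := by
        rw [← hvdef]; exact vp_p_zpow _
      have hlt : v β < v t := by
        rw [hvβ, hvt, WithTop.coe_lt_coe]; omega
      refine ⟨α, β + t, hvα, ?_, ?_, ?_, ?_⟩
      · rw [v.map_add_eq_of_lt_left hlt, hvβ]
      · simp only [sub_self]
        rw [← hvdef, vp]
        simp
      · have : β - (β + t) = -t := by ring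
        rw [this, v.map_neg, hvt]
      · have : α * β - α * (β + t) = -(α * t) := by ring
        rw [this, v.map_neg, v.map_mul, hvt, hvα, ← WithTop.coe_add, WithTop.coe_eq_coe, hmin]
        omega
end

section
/- Let p be a prime, x, y ∈ Q with x ≠ 0, and α ∈ Q_p nonzero with v_p(α) = −r. Let h ≥ 1 be an integer, let A be the h-digit truncation of α, and set k = v_p(x) − r + h − v_p(xA + y). If k ≥ 1, then v_p(xα + y) = v_p(xA + y), and for every α′ ∈ Q_p with v_p(α′) = −r and v_p(α − α′) ≥ −r + h one has v_p((xα + y) − (xα′ + y)) ≥ v_p(x) − r + h; hence xα + y and xα′ + y agree in their first k digits. -/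
open scoped Classical

variable {p : ℕ} [Fact p.Prime]

lemma vp_mul (a b : ℚ_[p]) : vp p (a * b) = vp p a + vp p b := by
  by_cases ha : a = 0
  · simp [vp, ha]
  by_cases hb : b = 0
  · simp [vp, hb]
  simp [vp, ha, hb, mul_ne_zero ha hb, Padic.valuation_mul ha hb]

lemma vp_neg (a : ℚ_[p]) : vp p (-a) = vp p a := by
  have : -a = -1 * a := by ring
  rw [this, vp_mul]
  have h1 : vp p (-1 : ℚ_[p]) = 0 := by
    have : ((-1 : ℚ_[p])).valuation = 0 := by
      have := Padic.valuation_mul (p := p) (x := (-1:ℚ_[p])) (y := (-1:ℚ_[p])) (by norm_num) (by norm_num)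
      simp at this
      omega
    simp [vp, this]
  rw [h1, zero_add]

lemma vp_add_min (a b : ℚ_[p]) : min (vp p a) (vp p b) ≤ vp p (a + b) := by
  by_cases hab : a + b = 0
  · simp [vp, hab]
  by_cases ha : a = 0
  · simp [vp, ha]
  by_cases hb : b = 0
  · simp [vp, hb]
  have := Padic.le_valuation_add (p := p) hab
  simp only [vp, ha, hb, hab, if_false]
  exact_mod_cast this

lemma vp_add_eq {a b : ℚ_[p]} (hlt : vp p a < vp p b) : vp p (a + b) = vp p a := by
  have h1 : vp p a ≤ vp p (a + b) := by
    have := vp_add_min a b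
    rwa [min_eq_left hlt.le] at this
  have h2 : vp p (a + b) ≤ vp p a := by
    by_contra hc
    push_neg at hc
    have := vp_add_min (a + b) (-b)
    simp only [add_neg_cancel_right] at this
    have : min (vp p (a + b)) (vp p b) ≤ vp p a := by rwa [vp_neg] at this
    rcases min_le_iff.mp this with h | h
    · exact absurd h hc.not_ge
    · exact absurd h hlt.not_ge
  exact le_antisymm h2 h1


/-- `A` is the `h`-digit truncation of `α`, where `v_p(α) = -r`: `A` is a rational with
`p^r · A ∈ {0, 1, …, p^h - 1}` and `v_p(α - A) ≥ -r + h`. -/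
def IsTrunc (p : ℕ) [Fact p.Prime] (α : ℚ_[p]) (r : ℤ) (h : ℕ) (A : ℚ) : Prop :=
  (∃ m : ℕ, (p : ℚ) ^ r * A = m ∧ m < p ^ h) ∧
    ((-r + h : ℤ) : WithTop ℤ) ≤ vp p (α - (A : ℚ_[p]))

/-- with `A` the `h`-digit truncation of `α` and
`k = v_p(x) - r + h - v_p(xA + y)`, if `k ≥ 1` (encoded additively as
`v_p(xA + y) + 1 ≤ v_p(x) + (-r + h)`) then `v_p(xα + y) = v_p(xA + y)`, and for every
`α'` agreeing with `α` in its first `h` digits,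
`v_p((xα + y) - (xα' + y)) ≥ v_p(x) - r + h`; hence `xα + y` and `xα' + y` agree in
their first `k` digits. -/
theorem stmt3 (p : ℕ) [Fact p.Prime] (x y : ℚ) (hx : x ≠ 0)
    (α : ℚ_[p]) (hα0 : α ≠ 0) (r : ℤ) (hvα : vp p α = ((-r : ℤ) : WithTop ℤ))
    (h : ℕ) (hh : 1 ≤ h) (A : ℚ) (hA : IsTrunc p α r h A)
    (hk : vp p ((x * A + y : ℚ) : ℚ_[p]) + 1
        ≤ vp p ((x : ℚ) : ℚ_[p]) + ((-r + h : ℤ) : WithTop ℤ)) :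
    vp p ((x : ℚ_[p]) * α + (y : ℚ_[p])) = vp p ((x * A + y : ℚ) : ℚ_[p]) ∧
    ∀ α' : ℚ_[p], vp p α' = ((-r : ℤ) : WithTop ℤ) →
      ((-r + h : ℤ) : WithTop ℤ) ≤ vp p (α - α') →
      vp p ((x : ℚ) : ℚ_[p]) + ((-r + h : ℤ) : WithTop ℤ)
        ≤ vp p (((x : ℚ_[p]) * α + (y : ℚ_[p])) - ((x : ℚ_[p]) * α' + (y : ℚ_[p]))) := by
  have hxp : ((x : ℚ) : ℚ_[p]) ≠ 0 := by exact_mod_cast hx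
  have hvx : vp p ((x : ℚ) : ℚ_[p]) = ((((x : ℚ) : ℚ_[p]).valuation : ℤ) : WithTop ℤ) := by
    simp [vp, hxp]
  constructor
  · -- first part
    set a : ℚ_[p] := ((x * A + y : ℚ) : ℚ_[p]) with ha_def
    have ha_ne : a ≠ 0 := by
      intro h0
      have : vp p a = ⊤ := by simp [vp, h0]
      rw [this] at hk
      simp only [top_add] at hk
      have : vp p ((x : ℚ) : ℚ_[p]) + ((-r + h : ℤ) : WithTop ℤ) = ⊤ := top_le_iff.mp hk
      rw [hvx, ← WithTop.coe_add] at this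
      exact WithTop.coe_ne_top this
    have hlt : vp p a < vp p ((x : ℚ_[p]) * (α - (A : ℚ_[p]))) := by
      have hmulb : vp p ((x : ℚ_[p]) * (α - (A : ℚ_[p])))
          = vp p ((x : ℚ) : ℚ_[p]) + vp p (α - (A : ℚ_[p])) := vp_mul _ _
      have hge : vp p ((x : ℚ) : ℚ_[p]) + ((-r + h : ℤ) : WithTop ℤ)
          ≤ vp p ((x : ℚ_[p]) * (α - (A : ℚ_[p]))) := by
        rw [hmulb]
        exact add_le_add_right hA.2 _
      have hfin : vp p a ≠ ⊤ := by simp [vp, ha_ne]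
      obtain ⟨n, hn⟩ := WithTop.ne_top_iff_exists.mp hfin
      have hself : vp p a < vp p a + 1 := by
        rw [← hn]
        exact_mod_cast lt_add_one n
      exact lt_of_lt_of_le hself (le_trans hk hge)
    have heq : (x : ℚ_[p]) * α + (y : ℚ_[p]) = a + (x : ℚ_[p]) * (α - (A : ℚ_[p])) := by
      rw [ha_def]
      push_cast
      ring
    rw [heq]
    exact vp_add_eq hlt
  · intro α' _ hagree
    have heq : ((x : ℚ_[p]) * α + (y : ℚ_[p])) - ((x : ℚ_[p]) * α' + (y : ℚ_[p]))
        = (x : ℚ_[p]) * (α - α') := by ring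
    rw [heq, vp_mul]
    exact add_le_add_right (le_trans hagree le_rfl) _
end

section
/- Let p be an odd prime. For every c ∈ pZ_p and every integer n ≥ 1, there exists a countable family of MR-cylinders of order n + 1, each contained in the ball {α ∈ pZ_p : |α − c|_p ≤ p^{−n}}, whose union contains every element of this ball whose MR expansion is infinite; in particular, every p-adic ball in pZ_p is, up to the countable set of elements with finite MR expansion, a countable union of MR-cylinders. -/
open scoped Classical
open MeasureTheory

/-- `a ∈ ℤ[1/p]`, i.e. `a` is a rational whose denominator is a power of `p`. -/
def InZinvp (p : ℕ) (a : ℚ) : Prop := ∃ n : ℕ, ∃ m : ℤ, a * (p : ℚ) ^ n = m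

/-- `a = s(α)`: the unique element of `ℤ[1/p] ∩ (-p/2, p/2)` with `v_p(α - a) ≥ 1`. -/
def IsSFloor (p : ℕ) [Fact p.Prime] (α : ℚ_[p]) (a : ℚ) : Prop :=
  InZinvp p a ∧ -((p : ℚ) / 2) < a ∧ a < (p : ℚ) / 2 ∧ 1 ≤ vp p (α - (a : ℚ_[p]))

/-- `a = t(α)`: the unique element of `ℤ[1/p] ∩ (-1/2, 1/2)` with `v_p(α - a) ≥ 0`. -/
def IsTFloor (p : ℕ) [Fact p.Prime] (α : ℚ_[p]) (a : ℚ) : Prop :=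
  InZinvp p a ∧ -(1 / 2 : ℚ) < a ∧ a < (1 / 2 : ℚ) ∧ 0 ≤ vp p (α - (a : ℚ_[p]))

/-- The Browkin floor function `s` (for odd `p` it exists and is unique). -/
noncomputable def sFloor (p : ℕ) [Fact p.Prime] (α : ℚ_[p]) : ℚ :=
  if h : ∃ a : ℚ, IsSFloor p α a then h.choose else 0

/-- The Browkin floor function `t` (for odd `p` it exists and is unique). -/
noncomputable def tFloor (p : ℕ) [Fact p.Prime] (α : ℚ_[p]) : ℚ :=
  if h : ∃ a : ℚ, IsTFloor p α a then h.choose else 0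

/-- The floor used by the MR algorithm at step `n`: `s` for even `n`, `t` for odd `n`. -/
noncomputable def mrFloor (p : ℕ) [Fact p.Prime] (n : ℕ) (x : ℚ_[p]) : ℚ :=
  if Even n then sFloor p x else tFloor p x

/-- The complete quotients `α_n` of the MR algorithm:
`α_0 = α`, `α_{n+1} = 1/(α_n - a_n)` with `a_n = s(α_n)` for even `n`, `t(α_n)` for
odd `n`. -/
noncomputable def mrCQ (p : ℕ) [Fact p.Prime] (α : ℚ_[p]) : ℕ → ℚ_[p]
  | 0 => α
  | n + 1 => (mrCQ p α n - ((mrFloor p n (mrCQ p α n) : ℚ) : ℚ_[p]))⁻¹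

/-- The partial quotients `a_n` of the MR expansion of `α`. -/
noncomputable def mrPQ (p : ℕ) [Fact p.Prime] (α : ℚ_[p]) (n : ℕ) : ℚ :=
  mrFloor p n (mrCQ p α n)

/-- The MR expansion of `α` reaches step `j`: `α_i ≠ a_i` for all `i < j`. -/
def MRReaches (p : ℕ) [Fact p.Prime] (α : ℚ_[p]) (j : ℕ) : Prop :=
  ∀ i, i < j → mrCQ p α i ≠ ((mrPQ p α i : ℚ) : ℚ_[p])

/-- The MR expansion of `α` is infinite: `α_n ≠ a_n` for all `n`. -/
def MRInfinite (p : ℕ) [Fact p.Prime] (α : ℚ_[p]) : Prop :=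
  ∀ n, mrCQ p α n ≠ ((mrPQ p α n : ℚ) : ℚ_[p])

/-- The MR-cylinder `C(y_1, …, y_m)` of order `m`: the set of `α ∈ pℤ_p` whose MR
expansion reaches step `m` and satisfies `a_1 = y_1, …, a_m = y_m`. -/
def MRCylinder (p : ℕ) [Fact p.Prime] (m : ℕ) (y : ℕ → ℚ) : Set ℚ_[p] :=
  {α : ℚ_[p] | 1 ≤ vp p α ∧ MRReaches p α m ∧ ∀ j, 1 ≤ j → j ≤ m → mrPQ p α j = y j}


section Aux

variable {p : ℕ} [Fact p.Prime]

lemma vp_ge_iff (k : ℤ) (x : ℚ_[p]) :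
    (k : WithTop ℤ) ≤ vp p x ↔ ‖x‖ ≤ (p : ℝ) ^ (-k) := by
  have hp1 : (1 : ℝ) < p := by exact_mod_cast (Fact.out : p.Prime).one_lt
  unfold vp
  split_ifs with h
  · simp only [h, norm_zero, le_top, true_iff]
    exact zpow_nonneg (Nat.cast_nonneg p) _
  · rw [Padic.norm_eq_zpow_neg_valuation h, zpow_le_zpow_iff_right₀ hp1, neg_le_neg_iff,
      WithTop.coe_le_coe]

/-- key rational lemma: small element of ℤ[1/p] with high valuation is zero -/
lemma eq_zero_of_small (k : ℕ) {a : ℚ} (h1 : InZinvp p a)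
    (h2 : ‖(a : ℚ_[p])‖ ≤ (p : ℝ) ^ (-(k : ℤ))) (h3 : |a| < (p : ℚ) ^ k) : a = 0 := by
  by_contra ha
  obtain ⟨n, m, hm⟩ := h1
  have hp0 : (0:ℚ) < (p:ℚ) := by exact_mod_cast (Fact.out : p.Prime).pos
  have hpR : (0:ℝ) < (p:ℝ) := by exact_mod_cast (Fact.out : p.Prime).pos
  have hm0 : m ≠ 0 := by
    rintro rfl
    simp only [Int.cast_zero, mul_eq_zero] at hm
    rcases hm with h | h
    · exact ha h
    · exact (pow_ne_zero n hp0.ne') h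
  have hnorm : ‖((m : ℚ) : ℚ_[p])‖ ≤ (p : ℝ) ^ (-((k + n : ℕ) : ℤ)) := by
    rw [← hm]
    push_cast
    rw [norm_mul]
    have : ‖((p : ℚ_[p]))^n‖ = (p:ℝ)^(-(n:ℤ)) := by
      simp [norm_pow, Padic.norm_p, ← zpow_natCast, ← zpow_neg]
    rw [norm_pow, Padic.norm_p]
    calc ‖((a:ℚ):ℚ_[p])‖ * ((p:ℝ))⁻¹ ^ n ≤ (p:ℝ)^(-(k:ℤ)) * ((p:ℝ))⁻¹ ^ n := by
          apply mul_le_mul_of_nonneg_right _ (by positivity)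
          exact_mod_cast h2
      _ = (p:ℝ)^(-((k + n : ℕ) : ℤ)) := by
          rw [inv_pow, ← zpow_natCast, ← zpow_neg, ← zpow_add₀ hpR.ne']
          rw [add_comm]
          norm_num
  have hdvd : (p : ℤ) ^ (k + n) ∣ m := by
    rw [← Padic.norm_int_le_pow_iff_dvd]
    exact_mod_cast hnorm
  have habs : ((p:ℤ) ^ (k + n) : ℤ) ≤ |m| :=
    Int.le_of_dvd (abs_pos.mpr hm0) ((dvd_abs _ _).mpr hdvd)
  have habs' : ((p:ℚ)) ^ (k + n) ≤ |(m:ℚ)| := by exact_mod_cast habs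
  have : |(m:ℚ)| < (p:ℚ) ^ (k+n) := by
    rw [← hm, abs_mul, abs_of_pos (pow_pos hp0 n), pow_add]
    exact mul_lt_mul_of_pos_right h3 (pow_pos hp0 n)
  linarith

lemma exists_near (hp : Odd p) (k : ℕ) (α : ℚ_[p]) :
    ∃ a : ℚ, InZinvp p a ∧ |a| < (p : ℚ) ^ k / 2 ∧ ‖α - (a : ℚ_[p])‖ ≤ (p : ℝ) ^ (-(k : ℤ)) := by
  have hppos : 0 < p := (Fact.out : p.Prime).pos
  have hp0 : (0:ℚ) < (p:ℚ) := by exact_mod_cast hppos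
  have hpR : (0:ℝ) < (p:ℝ) := by exact_mod_cast hppos
  -- step 1 : find e with p^e * α integral
  obtain ⟨e, he⟩ : ∃ e : ℕ, ‖(p:ℚ_[p])^e * α‖ ≤ 1 := by
    rcases eq_or_ne α 0 with rfl | hα
    · exact ⟨0, by simp⟩
    · refine ⟨(-α.valuation).toNat, ?_⟩
      rw [norm_mul, norm_pow, Padic.norm_p, Padic.norm_eq_zpow_neg_valuation hα,
        inv_pow, ← zpow_natCast, ← zpow_neg, ← zpow_add₀ hpR.ne']
      calc (p:ℝ) ^ (-((-α.valuation).toNat : ℤ) + -α.valuation) ≤ (p:ℝ) ^ (0:ℤ) := by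
            have hple : (1:ℝ) ≤ (p:ℝ) := by exact_mod_cast (Fact.out : p.Prime).one_le
            apply zpow_le_zpow_right₀ hple
            have := Int.self_le_toNat (-α.valuation)
            omega
        _ = 1 := zpow_zero _
  set z : ℤ_[p] := ⟨(p:ℚ_[p])^e * α, he⟩ with hz
  set m : ℕ := z.appr (k + e) with hmdef
  have hspec : ‖z - (m : ℤ_[p])‖ ≤ (p:ℝ) ^ (-((k+e : ℕ) : ℤ)) := by
    rw [PadicInt.norm_le_pow_iff_mem_span_pow]
    exact z.appr_spec (k+e)
  have hspec' : ‖(p:ℚ_[p])^e * α - ((m:ℚ) : ℚ_[p])‖ ≤ (p:ℝ) ^ (-((k+e : ℕ) : ℤ)) := by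
    have : ((z - (m : ℤ_[p]) : ℤ_[p]) : ℚ_[p]) = (p:ℚ_[p])^e * α - ((m:ℚ) : ℚ_[p]) := by
      push_cast [hz]
      rfl
    rwa [PadicInt.norm_def, this] at hspec
  set a0 : ℚ := (m : ℚ) / (p:ℚ)^e with ha0
  have hpow_ne : ((p:ℚ_[p]))^e ≠ 0 := pow_ne_zero _ (by exact_mod_cast hppos.ne')
  have ha0norm : ‖α - (a0 : ℚ_[p])‖ ≤ (p:ℝ) ^ (-(k:ℤ)) := by
    have key : α - (a0 : ℚ_[p]) = ((p:ℚ_[p])^e)⁻¹ * ((p:ℚ_[p])^e * α - ((m:ℚ):ℚ_[p])) := by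
      rw [ha0]; push_cast
      rw [mul_sub, ← mul_assoc, inv_mul_cancel₀ hpow_ne, one_mul, div_eq_inv_mul]
    rw [key, norm_mul, norm_inv, norm_pow, Padic.norm_p]
    calc (((p:ℝ))⁻¹ ^ e)⁻¹ * ‖(p:ℚ_[p])^e * α - ((m:ℚ):ℚ_[p])‖
        ≤ (p:ℝ)^(e:ℤ) * (p:ℝ)^(-((k+e : ℕ):ℤ)) := by
          rw [inv_pow, inv_inv, ← zpow_natCast]
          exact mul_le_mul_of_nonneg_left hspec' (by positivity)
      _ = (p:ℝ)^(-(k:ℤ)) := by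
          rw [← zpow_add₀ hpR.ne']
          congr 1
          push_cast
          ring
  set r : ℤ := round (a0 / (p:ℚ)^k) with hr
  refine ⟨a0 - (p:ℚ)^k * r, ⟨e, m - (p:ℤ)^(k+e) * r, ?_⟩, ?_, ?_⟩
  · have : a0 * (p:ℚ)^e = m := by rw [ha0, div_mul_cancel₀ _ (pow_ne_zero _ hp0.ne')]
    push_cast
    rw [sub_mul, this]
    ring
  · -- |a| < p^k/2
    have hle : |a0 - (p:ℚ)^k * r| ≤ (p:ℚ)^k / 2 := by
      have h1 : |a0 / (p:ℚ)^k - r| ≤ 1/2 := abs_sub_round _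
      have h2 : a0 - (p:ℚ)^k * r = (p:ℚ)^k * (a0 / (p:ℚ)^k - r) := by
        field_simp
      rw [h2, abs_mul, abs_of_pos (pow_pos hp0 k)]
      calc (p:ℚ)^k * |a0/(p:ℚ)^k - r| ≤ (p:ℚ)^k * (1/2) :=
            mul_le_mul_of_nonneg_left h1 (pow_pos hp0 k).le
        _ = (p:ℚ)^k / 2 := by ring
    rcases lt_or_eq_of_le hle with h | h
    · exact h
    · exfalso
      -- |a| = p^k/2 impossible for a ∈ ℤ[1/p], p odd
      have hInt : (a0 - (p:ℚ)^k * r) * (p:ℚ)^e = ((m - (p:ℤ)^(k+e) * r : ℤ) : ℚ) := by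
        have : a0 * (p:ℚ)^e = m := by rw [ha0, div_mul_cancel₀ _ (pow_ne_zero _ hp0.ne')]
        push_cast
        rw [sub_mul, this]
        ring
      set M : ℤ := m - (p:ℤ)^(k+e) * r
      have habs : |(M:ℚ)| = (p:ℚ)^(k+e) / 2 := by
        rw [← hInt, abs_mul, h, abs_of_pos (pow_pos hp0 e), pow_add]
        ring
      have h2M : (2 * |M| : ℤ) = (p:ℤ)^(k+e) := by
        have : (2 * |(M:ℚ)| : ℚ) = ((p:ℤ)^(k+e) : ℚ) := by rw [habs]; push_cast; ring
        exact_mod_cast this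
      have : Even ((p:ℤ)^(k+e)) := ⟨|M|, by omega⟩
      have hodd : Odd ((p:ℤ)^(k+e)) := Odd.pow (by exact_mod_cast hp)
      exact ((Int.not_odd_iff_even.mpr this)) hodd
  · -- norm bound
    have key : α - ((a0 - (p:ℚ)^k * r : ℚ) : ℚ_[p])
        = (α - (a0:ℚ_[p])) + (p:ℚ_[p])^k * ((r:ℤ):ℚ_[p]) := by
      push_cast
      ring
    rw [key]
    refine le_trans (Padic.nonarchimedean _ _) (max_le ha0norm ?_)
    rw [norm_mul, norm_pow, Padic.norm_p]
    calc ((p:ℝ))⁻¹^k * ‖((r:ℤ):ℚ_[p])‖ ≤ ((p:ℝ))⁻¹^k * 1 :=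
          mul_le_mul_of_nonneg_left (Padic.norm_int_le_one r) (by positivity)
      _ = (p:ℝ)^(-(k:ℤ)) := by rw [mul_one, inv_pow, ← zpow_natCast, ← zpow_neg]

lemma norm_sub_le_max' (x y : ℚ_[p]) (c : ℝ) (h1 : ‖x‖ ≤ c) (h2 : ‖y‖ ≤ c) :
    ‖x - y‖ ≤ c := by
  rw [sub_eq_add_neg]
  refine le_trans (Padic.nonarchimedean x (-y)) (max_le h1 ?_)
  rwa [norm_neg]

lemma InZinvp.sub {a b : ℚ} (ha : InZinvp p a) (hb : InZinvp p b) : InZinvp p (a - b) := by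
  obtain ⟨n, m, hm⟩ := ha
  obtain ⟨n', m', hm'⟩ := hb
  refine ⟨n + n', m * (p:ℤ)^n' - m' * (p:ℤ)^n, ?_⟩
  push_cast
  rw [pow_add]
  linear_combination (p:ℚ)^n' * hm - (p:ℚ)^n * hm'

lemma InZinvp.zero : InZinvp p 0 := ⟨0, 0, by simp⟩

lemma exists_isSFloor (hp : Odd p) (α : ℚ_[p]) : ∃ a, IsSFloor p α a := by
  obtain ⟨a, h1, h2, h3⟩ := exists_near hp 1 α
  rw [pow_one] at h2
  rw [abs_lt] at h2
  refine ⟨a, h1, h2.1, h2.2, ?_⟩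
  rw [show (1 : WithTop ℤ) = ((1:ℤ) : WithTop ℤ) by norm_cast, vp_ge_iff]
  exact_mod_cast h3

lemma exists_isTFloor (hp : Odd p) (α : ℚ_[p]) : ∃ a, IsTFloor p α a := by
  obtain ⟨a, h1, h2, h3⟩ := exists_near hp 0 α
  rw [pow_zero] at h2
  rw [abs_lt] at h2
  refine ⟨a, h1, h2.1, h2.2, ?_⟩
  rw [show (0 : WithTop ℤ) = ((0:ℤ) : WithTop ℤ) by norm_cast, vp_ge_iff]
  exact_mod_cast h3

lemma isSFloor_unique {α : ℚ_[p]} {a a' : ℚ} (h : IsSFloor p α a) (h' : IsSFloor p α a') :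
    a = a' := by
  obtain ⟨hz, hl, hr, hv⟩ := h
  obtain ⟨hz', hl', hr', hv'⟩ := h'
  rw [show (1 : WithTop ℤ) = ((1:ℤ) : WithTop ℤ) by norm_cast, vp_ge_iff] at hv hv'
  have key : a - a' = 0 := by
    apply eq_zero_of_small (p := p) 1
    · exact hz.sub hz'
    · have : ((a - a' : ℚ) : ℚ_[p]) = (α - (a':ℚ_[p])) - (α - (a:ℚ_[p])) := by push_cast; ring
      rw [this]
      refine norm_sub_le_max' _ _ _ ?_ ?_
      · exact_mod_cast hv'
      · exact_mod_cast hv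
    · rw [pow_one, abs_lt]; constructor <;> linarith
  linarith

lemma isTFloor_unique {α : ℚ_[p]} {a a' : ℚ} (h : IsTFloor p α a) (h' : IsTFloor p α a') :
    a = a' := by
  obtain ⟨hz, hl, hr, hv⟩ := h
  obtain ⟨hz', hl', hr', hv'⟩ := h'
  rw [show (0 : WithTop ℤ) = ((0:ℤ) : WithTop ℤ) by norm_cast, vp_ge_iff] at hv hv'
  have key : a - a' = 0 := by
    apply eq_zero_of_small (p := p) 0
    · exact hz.sub hz'
    · have : ((a - a' : ℚ) : ℚ_[p]) = (α - (a':ℚ_[p])) - (α - (a:ℚ_[p])) := by push_cast; ring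
      rw [this]
      refine norm_sub_le_max' _ _ _ ?_ ?_
      · exact_mod_cast hv'
      · exact_mod_cast hv
    · rw [pow_zero, abs_lt]; constructor <;> linarith
  linarith



lemma sFloor_spec (hp : Odd p) (x : ℚ_[p]) : IsSFloor p x (sFloor p x) := by
  have hex := exists_isSFloor hp x
  rw [sFloor, dif_pos hex]
  exact hex.choose_spec

lemma tFloor_spec (hp : Odd p) (x : ℚ_[p]) : IsTFloor p x (tFloor p x) := by
  have hex := exists_isTFloor hp x
  rw [tFloor, dif_pos hex]
  exact hex.choose_spec

lemma norm_sub_sFloor (hp : Odd p) (x : ℚ_[p]) :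
    ‖x - ((sFloor p x : ℚ) : ℚ_[p])‖ ≤ (p:ℝ) ^ (-1 : ℤ) := by
  have h := (sFloor_spec hp x).2.2.2
  rw [show (1 : WithTop ℤ) = ((1:ℤ) : WithTop ℤ) by norm_cast, vp_ge_iff] at h
  exact h

lemma norm_sub_tFloor (hp : Odd p) (x : ℚ_[p]) :
    ‖x - ((tFloor p x : ℚ) : ℚ_[p])‖ ≤ 1 := by
  have h := (tFloor_spec hp x).2.2.2
  rw [show (0 : WithTop ℤ) = ((0:ℤ) : WithTop ℤ) by norm_cast, vp_ge_iff] at h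
  simpa using h

lemma sFloor_eq_zero (hp : Odd p) {x : ℚ_[p]} (hx : 1 ≤ vp p x) : sFloor p x = 0 := by
  have h0 : IsSFloor p x 0 := by
    have hp2 : (0:ℚ) < (p:ℚ)/2 := by
      have : (0:ℚ) < (p:ℚ) := by exact_mod_cast (Fact.out : p.Prime).pos
      linarith
    exact ⟨⟨0, 0, by simp⟩, by linarith, hp2, by simpa using hx⟩
  exact isSFloor_unique (sFloor_spec hp x) h0

lemma norm_sub_mrFloor (hp : Odd p) (i : ℕ) (x : ℚ_[p]) :
    ‖x - ((mrFloor p i x : ℚ) : ℚ_[p])‖ ≤ (if Even i then (p:ℝ) ^ (-1 : ℤ) else 1) := by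
  unfold mrFloor
  split_ifs with h
  · exact norm_sub_sFloor hp x
  · exact norm_sub_tFloor hp x

lemma key_ineq (hp : Odd p) (α β : ℚ_[p]) (m : ℕ)
    (hα : ∀ i, i < m → mrCQ p α i ≠ ((mrPQ p α i : ℚ) : ℚ_[p]))
    (hβ : ∀ i, i < m → mrCQ p β i ≠ ((mrPQ p β i : ℚ) : ℚ_[p]))
    (heq : ∀ i, i < m → mrPQ p α i = mrPQ p β i) :
    ‖α - β‖ ≤ (p:ℝ) ^ (-(2 * ((m+1)/2 : ℕ) : ℤ)) * ‖mrCQ p α m - mrCQ p β m‖ := by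
  have hpR : (0:ℝ) < (p:ℝ) := by exact_mod_cast (Fact.out : p.Prime).pos
  induction m with
  | zero => simp [mrCQ]
  | succ m ih =>
    have h1 := ih (fun i hi => hα i (by omega)) (fun i hi => hβ i (by omega))
      (fun i hi => heq i (by omega))
    set A := mrCQ p α m with hA
    set B := mrCQ p β m with hB
    set a : ℚ := mrPQ p α m with ha
    have hau : A - ((a:ℚ):ℚ_[p]) ≠ 0 := sub_ne_zero.mpr (hα m (by omega))
    have hbv : B - ((a:ℚ):ℚ_[p]) ≠ 0 := by
      rw [ha, heq m (by omega)]
      exact sub_ne_zero.mpr (hβ m (by omega))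
    have hrecα : mrCQ p α (m+1) = (A - ((a:ℚ):ℚ_[p]))⁻¹ := rfl
    have hrecβ : mrCQ p β (m+1) = (B - ((a:ℚ):ℚ_[p]))⁻¹ := by
      show (B - ((mrFloor p m B : ℚ):ℚ_[p]))⁻¹ = _
      rw [show mrFloor p m B = a from (heq m (by omega)).symm]
    have hiden : A - B
        = -((mrCQ p α (m+1) - mrCQ p β (m+1)) * ((A - ((a:ℚ):ℚ_[p])) * (B - ((a:ℚ):ℚ_[p])))) := by
      rw [hrecα, hrecβ]
      field_simp
      ring
    have hnorm : ‖A - B‖ = ‖mrCQ p α (m+1) - mrCQ p β (m+1)‖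
        * (‖A - ((a:ℚ):ℚ_[p])‖ * ‖B - ((a:ℚ):ℚ_[p])‖) := by
      rw [hiden, norm_neg, norm_mul, norm_mul]
    have hu : ‖A - ((a:ℚ):ℚ_[p])‖ ≤ (if Even m then (p:ℝ) ^ (-1 : ℤ) else 1) := by
      rw [ha]
      exact norm_sub_mrFloor hp m A
    have hv : ‖B - ((a:ℚ):ℚ_[p])‖ ≤ (if Even m then (p:ℝ) ^ (-1 : ℤ) else 1) := by
      rw [ha, heq m (by omega)]
      exact norm_sub_mrFloor hp m B
    have hbound : (p:ℝ) ^ (-(2 * ((m+1)/2 : ℕ) : ℤ))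
        * (‖A - ((a:ℚ):ℚ_[p])‖ * ‖B - ((a:ℚ):ℚ_[p])‖)
        ≤ (p:ℝ) ^ (-(2 * ((m+2)/2 : ℕ) : ℤ)) := by
      by_cases hm : Even m
      · rw [if_pos hm] at hu hv
        have h2 : (m+2)/2 = (m+1)/2 + 1 := by
          obtain ⟨t, rfl⟩ := hm; omega
        calc (p:ℝ) ^ (-(2 * ((m+1)/2 : ℕ) : ℤ)) * (‖A - ((a:ℚ):ℚ_[p])‖ * ‖B - ((a:ℚ):ℚ_[p])‖)
            ≤ (p:ℝ) ^ (-(2 * ((m+1)/2 : ℕ) : ℤ)) * ((p:ℝ) ^ (-1 : ℤ) * (p:ℝ) ^ (-1 : ℤ)) := by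
              apply mul_le_mul_of_nonneg_left _ (zpow_nonneg hpR.le _)
              exact mul_le_mul hu hv (norm_nonneg _) (zpow_nonneg hpR.le _)
          _ = (p:ℝ) ^ (-(2 * ((m+2)/2 : ℕ) : ℤ)) := by
              rw [← zpow_add₀ hpR.ne', ← zpow_add₀ hpR.ne', h2]
              congr 1
              push_cast
              ring
      · rw [if_neg hm] at hu hv
        have h2 : (m+2)/2 = (m+1)/2 := by
          rcases Nat.even_or_odd m with h | ⟨t, rfl⟩
          · exact absurd h hm
          · omega
        rw [h2]
        calc (p:ℝ) ^ (-(2 * ((m+1)/2 : ℕ) : ℤ)) * (‖A - ((a:ℚ):ℚ_[p])‖ * ‖B - ((a:ℚ):ℚ_[p])‖)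
            ≤ (p:ℝ) ^ (-(2 * ((m+1)/2 : ℕ) : ℤ)) * (1 * 1) := by
              apply mul_le_mul_of_nonneg_left _ (zpow_nonneg hpR.le _)
              exact mul_le_mul hu hv (norm_nonneg _) zero_le_one
          _ = (p:ℝ) ^ (-(2 * ((m+1)/2 : ℕ) : ℤ)) := by ring
    calc ‖α - β‖ ≤ (p:ℝ) ^ (-(2 * ((m+1)/2 : ℕ) : ℤ)) * ‖A - B‖ := h1
      _ = ((p:ℝ) ^ (-(2 * ((m+1)/2 : ℕ) : ℤ))
            * (‖A - ((a:ℚ):ℚ_[p])‖ * ‖B - ((a:ℚ):ℚ_[p])‖))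
            * ‖mrCQ p α (m+1) - mrCQ p β (m+1)‖ := by rw [hnorm]; ring
      _ ≤ (p:ℝ) ^ (-(2 * ((m+2)/2 : ℕ) : ℤ)) * ‖mrCQ p α (m+1) - mrCQ p β (m+1)‖ :=
            mul_le_mul_of_nonneg_right hbound (norm_nonneg _)

lemma dist_of_same_pq (hp : Odd p) (n : ℕ) (α β : ℚ_[p])
    (hα1 : 1 ≤ vp p α) (hβ1 : 1 ≤ vp p β)
    (hαR : MRReaches p α (n+1)) (hβR : MRReaches p β (n+1))
    (heq : ∀ j, 1 ≤ j → j ≤ n → mrPQ p α j = mrPQ p β j) :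
    ‖α - β‖ ≤ (p:ℝ) ^ (-(n:ℤ)) := by
  have hpR : (0:ℝ) < (p:ℝ) := by exact_mod_cast (Fact.out : p.Prime).pos
  have hp1 : (1:ℝ) ≤ (p:ℝ) := by exact_mod_cast (Fact.out : p.Prime).one_le
  have heq' : ∀ i, i < n + 1 → mrPQ p α i = mrPQ p β i := by
    intro i hi
    rcases Nat.eq_zero_or_pos i with rfl | hpos
    · show mrFloor p 0 (mrCQ p α 0) = mrFloor p 0 (mrCQ p β 0)
      show mrFloor p 0 α = mrFloor p 0 β
      unfold mrFloor
      rw [if_pos (Even.zero), if_pos (Even.zero), sFloor_eq_zero hp hα1, sFloor_eq_zero hp hβ1]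
    · exact heq i hpos (by omega)
  have hkey := key_ineq hp α β n (fun i hi => hαR i (by omega)) (fun i hi => hβR i (by omega))
    (fun i hi => heq' i (by omega))
  set a : ℚ := mrPQ p α n with ha
  have hAB : ‖mrCQ p α n - mrCQ p β n‖ ≤ (if Even n then (p:ℝ) ^ (-1 : ℤ) else 1) := by
    have hdecomp : mrCQ p α n - mrCQ p β n
        = (mrCQ p α n - ((a:ℚ):ℚ_[p])) - (mrCQ p β n - ((a:ℚ):ℚ_[p])) := by ring
    rw [hdecomp]
    apply norm_sub_le_max'
    · rw [ha]; exact norm_sub_mrFloor hp n _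
    · rw [ha, heq' n (by omega)]; exact norm_sub_mrFloor hp n _
  calc ‖α - β‖ ≤ (p:ℝ) ^ (-(2 * ((n+1)/2 : ℕ) : ℤ)) * ‖mrCQ p α n - mrCQ p β n‖ := hkey
    _ ≤ (p:ℝ) ^ (-(n:ℤ)) := by
      by_cases hn : Even n
      · rw [if_pos hn] at hAB
        have h2 : 2 * ((n+1)/2) = n := by obtain ⟨t, rfl⟩ := hn; omega
        calc (p:ℝ) ^ (-(2 * ((n+1)/2 : ℕ) : ℤ)) * ‖mrCQ p α n - mrCQ p β n‖
            ≤ (p:ℝ) ^ (-(2 * ((n+1)/2 : ℕ) : ℤ)) * 1 := by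
              apply mul_le_mul_of_nonneg_left _ (zpow_nonneg hpR.le _)
              exact hAB.trans (by
                rw [zpow_neg_one]
                exact inv_le_one_of_one_le₀ hp1)
          _ = (p:ℝ) ^ (-(n:ℤ)) := by
              rw [mul_one]
              congr 1
              have : ((2 * ((n + 1) / 2) : ℕ) : ℤ) = (n:ℤ) := by exact_mod_cast congrArg (Nat.cast : ℕ → ℤ) h2
              omega
      · rw [if_neg hn] at hAB
        have h2 : 2 * ((n+1)/2) = n + 1 := by
          rcases Nat.even_or_odd n with h | ⟨t, rfl⟩
          · exact absurd h hn
          · omega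
        calc (p:ℝ) ^ (-(2 * ((n+1)/2 : ℕ) : ℤ)) * ‖mrCQ p α n - mrCQ p β n‖
            ≤ (p:ℝ) ^ (-(2 * ((n+1)/2 : ℕ) : ℤ)) * 1 :=
              mul_le_mul_of_nonneg_left hAB (zpow_nonneg hpR.le _)
          _ ≤ (p:ℝ) ^ (-(n:ℤ)) := by
              rw [mul_one]
              apply zpow_le_zpow_right₀ hp1
              have : ((2 * ((n + 1) / 2) : ℕ) : ℤ) = (n:ℤ) + 1 := by exact_mod_cast congrArg (Nat.cast : ℕ → ℤ) h2
              omega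


end Aux

/-- for every `c ∈ pℤ_p` and `n ≥ 1`, there is a countable family of
MR-cylinders of order `n + 1`, each contained in the ball
`{α ∈ pℤ_p : |α - c|_p ≤ p^{-n}}`, whose union contains every element of this ball
whose MR expansion is infinite. -/
theorem stmt16 (p : ℕ) [Fact p.Prime] (hp : Odd p)
    (c : ℚ_[p]) (hc : 1 ≤ vp p c) (n : ℕ) (hn : 1 ≤ n) :
    ∃ S : Set (ℕ → ℚ), S.Countable ∧
      (∀ y ∈ S, MRCylinder p (n + 1) y
        ⊆ {α : ℚ_[p] | 1 ≤ vp p α ∧ ‖α - c‖ ≤ (p : ℝ) ^ (-(n : ℤ))}) ∧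
      (∀ α : ℚ_[p], 1 ≤ vp p α → ‖α - c‖ ≤ (p : ℝ) ^ (-(n : ℤ)) → MRInfinite p α →
        ∃ y ∈ S, α ∈ MRCylinder p (n + 1) y) := by
  classical
  set Ball : Set ℚ_[p] := {α : ℚ_[p] | 1 ≤ vp p α ∧ ‖α - c‖ ≤ (p : ℝ) ^ (-(n : ℤ))} with hBall
  set S : Set (ℕ → ℚ) :=
    {y | (∀ j, j = 0 ∨ n + 1 < j → y j = 0) ∧ MRCylinder p (n+1) y ⊆ Ball} with hS
  refine ⟨S, ?_, ?_, ?_⟩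
  · -- countability
    set g : (Fin (n+2) → ℚ) → (ℕ → ℚ) :=
      fun v j => if h : j < n + 2 then v ⟨j, h⟩ else 0 with hg
    have hsub : S ⊆ Set.range g := by
      rintro y ⟨hy0, -⟩
      refine ⟨fun i => y i, funext fun j => ?_⟩
      by_cases h : j < n + 2
      · simp [hg, h]
      · simp only [hg, dif_neg h]
        exact (hy0 j (by omega)).symm
    exact Set.Countable.mono hsub (Set.countable_range g)
  · exact fun y hy => hy.2
  · intro α hα1 hαball hinf
    set y : ℕ → ℚ := fun j => if j = 0 ∨ n + 1 < j then 0 else mrPQ p α j with hy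
    have hmem : α ∈ MRCylinder p (n+1) y := by
      refine ⟨hα1, fun i _ => hinf i, fun j hj1 hj2 => ?_⟩
      simp only [hy]
      rw [if_neg (by omega)]
    refine ⟨y, ⟨fun j hj => by simp only [hy]; rw [if_pos hj], ?_⟩, hmem⟩
    rintro β ⟨hβ1, hβR, hβpq⟩
    have heq : ∀ j, 1 ≤ j → j ≤ n → mrPQ p α j = mrPQ p β j := by
      intro j h1 h2
      have hβj := hβpq j h1 (by omega)
      simp only [hy] at hβj
      rw [if_neg (by omega)] at hβj
      exact hβj.symm
    have hdist : ‖α - β‖ ≤ (p:ℝ) ^ (-(n:ℤ)) :=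
      dist_of_same_pq hp n α β hα1 hβ1 (fun i _ => hinf i) hβR heq
    refine ⟨hβ1, ?_⟩
    have hrw : β - c = (β - α) - (c - α) := by ring
    rw [hrw]
    apply norm_sub_le_max'
    · rw [show β - α = -(α - β) by ring, norm_neg]
      exact hdist
    · rw [show c - α = -(α - c) by ring, norm_neg]
      exact hαball
end
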